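/- Substituting the invariants p₀,…,p₄ into the quadric G_M := y₀² + 3(y₁² + y₂² + y₃²) + 6y₄² recovers Maschke's octic polynomial: G_M(p₀,p₁,p₂,p₃,p₄) = F as polynomials in ℂ[x₀,x₁,x₂,x₃]. -/

import Mathlib

open MvPolynomial

/-- `p₀ := x₀⁴+x₁⁴+x₂⁴+x₃⁴`. -/
noncomputable def p0 : MvPolynomial (Fin 4) ℂ := X 0 ^ 4 + X 1 ^ 4 + X 2 ^ 4 + X 3 ^ 4

/-- `p₁ := 2(x₀²x₁²+x₂²x₃²)`. -/
noncomputable def p1 : MvPolynomial (Fin 4) ℂ := 2 * (X 0 ^ 2 * X 1 ^ 2 + X 2 ^ 2 * X 3 ^ 2)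

/-- `p₂ := 2(x₀²x₂²+x₁²x₃²)`. -/
noncomputable def p2 : MvPolynomial (Fin 4) ℂ := 2 * (X 0 ^ 2 * X 2 ^ 2 + X 1 ^ 2 * X 3 ^ 2)

/-- `p₃ := 2(x₀²x₃²+x₁²x₂²)`. -/
noncomputable def p3 : MvPolynomial (Fin 4) ℂ := 2 * (X 0 ^ 2 * X 3 ^ 2 + X 1 ^ 2 * X 2 ^ 2)

/-- `p₄ := 4x₀x₁x₂x₃`. -/
noncomputable def p4 : MvPolynomial (Fin 4) ℂ := 4 * (X 0 * X 1 * X 2 * X 3)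

/-- The quadric `G_M := y₀² + 3(y₁² + y₂² + y₃²) + 6y₄²`. -/
noncomputable def GM : MvPolynomial (Fin 5) ℂ :=
  X 0 ^ 2 + 3 * (X 1 ^ 2 + X 2 ^ 2 + X 3 ^ 2) + 6 * X 4 ^ 2

/-- Maschke's octic polynomial `F` as an element of `ℂ[x₀,x₁,x₂,x₃]`. -/
noncomputable def F : MvPolynomial (Fin 4) ℂ :=
  X 0 ^ 8 + X 1 ^ 8 + X 2 ^ 8 + X 3 ^ 8 +
    14 * (X 0 ^ 4 * X 1 ^ 4 + X 0 ^ 4 * X 2 ^ 4 + X 0 ^ 4 * X 3 ^ 4 +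
          X 1 ^ 4 * X 2 ^ 4 + X 1 ^ 4 * X 3 ^ 4 + X 2 ^ 4 * X 3 ^ 4) +
    168 * (X 0 ^ 2 * X 1 ^ 2 * X 2 ^ 2 * X 3 ^ 2)

/-- `p₀²` gives the eighth powers and `2xᵢ⁴xⱼ⁴`; each `3pₖ²` gives `12xᵢ⁴xⱼ⁴` and
`24x₀²x₁²x₂²x₃²`; `6p₄²` gives `96x₀²x₁²x₂²x₃²`. Hence `14 = 2 + 12` and `168 = 3·24 + 96`. -/
theorem maschke_quadric_identity {R : Type*} [CommSemiring R] (a b c d : R) :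
    (a ^ 4 + b ^ 4 + c ^ 4 + d ^ 4) ^ 2 +
        3 * ((2 * (a ^ 2 * b ^ 2 + c ^ 2 * d ^ 2)) ^ 2 + (2 * (a ^ 2 * c ^ 2 + b ^ 2 * d ^ 2)) ^ 2 +
          (2 * (a ^ 2 * d ^ 2 + b ^ 2 * c ^ 2)) ^ 2) + 6 * (4 * (a * b * c * d)) ^ 2 =
      a ^ 8 + b ^ 8 + c ^ 8 + d ^ 8 +
        14 * (a ^ 4 * b ^ 4 + a ^ 4 * c ^ 4 + a ^ 4 * d ^ 4 +
          b ^ 4 * c ^ 4 + b ^ 4 * d ^ 4 + c ^ 4 * d ^ 4) +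
        168 * (a ^ 2 * b ^ 2 * c ^ 2 * d ^ 2) := by
  ring

theorem aeval_GM {A : Type*} [CommSemiring A] [Algebra ℂ A] (y : Fin 5 → A) :
    aeval y GM = y 0 ^ 2 + 3 * (y 1 ^ 2 + y 2 ^ 2 + y 3 ^ 2) + 6 * y 4 ^ 2 := by
  simp only [GM, map_add, map_mul, map_pow, map_ofNat, aeval_X]

/-- Substituting the invariants `p₀,…,p₄` into the quadric `G_M` recovers Maschke's
octic polynomial: `G_M(p₀,p₁,p₂,p₃,p₄) = F` in `ℂ[x₀,x₁,x₂,x₃]`. -/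
theorem GM_of_invariants_eq_maschke_octic :
    aeval ![p0, p1, p2, p3, p4] GM = F := by
  rw [aeval_GM]
  exact maschke_quadric_identity (X 0) (X 1) (X 2) (X 3)
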